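/- (Kazhdan–Lusztig, uniqueness) For each x ∈ W there exists a unique self-dual element C_x ∈ H such that C_x ∈ H_x + Σ_y v Z[v] H_y. -/

import Mathlib

open LaurentPolynomial

/-- Membership in `v ℤ[v] ⊆ ℤ[v,v⁻¹]`. -/
def IsVPol (p : LaurentPolynomial ℤ) : Prop :=
  ∃ q : Polynomial ℤ, p = Polynomial.toLaurent q * T 1

/-- The coefficient of `v` in a Laurent polynomial. -/
def muCoeff (p : LaurentPolynomial ℤ) : ℤ := p.coeff 1

variable {B W : Type*} [Group W] {M : CoxeterMatrix B}

/-- The Bruhat order `≤` on `W`: generated by right multiplication by reflections which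
increases the length. -/
def BruhatLE (cs : CoxeterSystem M W) : W → W → Prop :=
  Relation.ReflTransGen
    (fun a b => (∃ t, cs.IsReflection t ∧ b = a * t) ∧ cs.length a < cs.length b)

/-- The strict Bruhat order on `W`. -/
def BruhatLT (cs : CoxeterSystem M W) (x y : W) : Prop :=
  BruhatLE cs x y ∧ x ≠ y

/-- The Hecke algebra of a Coxeter system, axiomatized: a `ℤ[v,v⁻¹]`-algebra with a basis
`T_x` indexed by `W` satisfying the braid and quadratic relations. -/
structure HeckeAlg (cs : CoxeterSystem M W) (A : Type*) [Ring A]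
    [Algebra (LaurentPolynomial ℤ) A] where
  Tb : Module.Basis W (LaurentPolynomial ℤ) A
  Tb_one : Tb 1 = 1
  Tb_mul : ∀ x y : W, cs.length (x * y) = cs.length x + cs.length y →
    Tb x * Tb y = Tb (x * y)
  Tb_quadratic : ∀ i : B, (Tb (cs.simple i) + 1) *
    (Tb (cs.simple i) - algebraMap (LaurentPolynomial ℤ) A (T (-2))) = 0

namespace HeckeAlg

variable {cs : CoxeterSystem M W} {A : Type*} [Ring A] [Algebra (LaurentPolynomial ℤ) A]

/-- The standard basis element `H_x = v^{ℓ(x)} T_x`. -/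
noncomputable def H (ha : HeckeAlg cs A) (x : W) : A :=
  algebraMap (LaurentPolynomial ℤ) A (T (cs.length x : ℤ)) * ha.Tb x

/-- The element `C_s = H_s + v` for a simple reflection `s`. -/
noncomputable def Cs (ha : HeckeAlg cs A) (i : B) : A :=
  ha.H (cs.simple i) + algebraMap (LaurentPolynomial ℤ) A (T 1)

/-- Data of the bar involution `d` on the Hecke algebra: a ring endomorphism with
`d(v) = v⁻¹` and `d(H_x) = (H_{x⁻¹})⁻¹`. -/
structure Bar (ha : HeckeAlg cs A) where
  d : A →+* A
  d_scalar : ∀ n : ℤ, d (algebraMap (LaurentPolynomial ℤ) A (T n)) =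
    algebraMap (LaurentPolynomial ℤ) A (T (-n))
  d_H_mul : ∀ x : W, d (ha.H x) * ha.H x⁻¹ = 1
  d_H_mul' : ∀ x : W, ha.H x⁻¹ * d (ha.H x) = 1

/-- `c` is a Kazhdan–Lusztig basis element at `x`: bar-invariant and congruent to `H_x`
modulo `∑_y v ℤ[v] H_y`. -/
def IsKL (ha : HeckeAlg cs A) (bar : ha.Bar) (x : W) (c : A) : Prop :=
  bar.d c = c ∧ ∃ f : W →₀ LaurentPolynomial ℤ, (∀ y, IsVPol (f y)) ∧
    c = ha.H x + f.sum fun y r => r • ha.H y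

end HeckeAlg

open scoped Classical
open HeckeAlg

/-!
Uniqueness: the difference of two such elements is self-dual with all coefficients in `vℤ[v]`.
The bar involution is unitriangular, `d(H_x) ∈ H_x + ∑_{ℓ(y)<ℓ(x)} ℤ[v,v⁻¹] H_y`, so the
coefficient `p` of a self-dual element at a basis element of maximal length in its support satisfies
`p(v⁻¹) = p(v)`, which forces `p = 0` when `p ∈ vℤ[v]`.

Existence, by induction on `ℓ(x)`: for `x = s y > y` the element `C_s C_y` is self-dual and lies in
`H_x + ∑_{ℓ(z)<ℓ(x)} ℤ[v] H_z`; subtracting `∑_z p_z(0) C_z`, where `p_z(0)` is the constant term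
of its `H_z`-coefficient, moves all these coefficients into `vℤ[v]`.
-/

namespace LaurentPolynomial

open Polynomial

variable {R : Type*} [CommRing R]

-- `supportedIn (Set.Ici 0)` is `ℤ[v]` and `supportedIn (Set.Ioi 0)` is `vℤ[v]`.
def supportedIn (s : Set ℤ) : AddSubgroup R[T;T⁻¹] where
  carrier := {p | ∀ m ∉ s, p.coeff m = 0}
  zero_mem' _ _ := rfl
  add_mem' hp hq m hm := by simp [AddMonoidAlgebra.coeff_add, hp m hm, hq m hm]
  neg_mem' hp m hm := by simp [AddMonoidAlgebra.coeff_neg, hp m hm]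

variable {s t : Set ℤ} {p : R[T;T⁻¹]}

lemma supportedIn_mono (h : s ⊆ t) :
    supportedIn s ≤ (supportedIn t : AddSubgroup R[T;T⁻¹]) :=
  fun _ hp m hm => hp m fun hs => hm (h hs)

lemma T_mem_supportedIn {k : ℤ} (hk : k ∈ s) : (T k : R[T;T⁻¹]) ∈ supportedIn s := by
  intro m hm
  rw [T_apply, if_neg (by rintro rfl; exact hm hk)]

lemma T_mul_mem_supportedIn {k : ℤ} (hst : ∀ m ∈ s, k + m ∈ t) (hp : p ∈ supportedIn s) :
    T k * p ∈ supportedIn t := by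
  intro m hm
  rw [T, AddMonoidAlgebra.coeff_single_mul_apply, one_mul]
  exact hp _ fun h => hm (by simpa using hst _ h)

lemma sub_C_coeff_zero_mem_supportedIn (hp : p ∈ supportedIn (Set.Ici 0)) :
    p - C (p.coeff 0) ∈ supportedIn (Set.Ioi 0) := by
  intro m hm
  rw [Set.mem_Ioi, not_lt] at hm
  rw [AddMonoidAlgebra.coeff_sub, Finsupp.sub_apply, C_apply]
  rcases hm.lt_or_eq with hm | rfl
  · rw [hp m (by simpa using hm), if_neg hm.ne, sub_zero]
  · rw [if_pos rfl, sub_self]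

lemma eq_zero_of_invert_eq_self (hp : p ∈ supportedIn (Set.Ioi 0)) (h : invert p = p) :
    p = 0 := by
  ext m
  rcases le_or_gt m 0 with hm | hm
  · exact hp m (not_lt.mpr hm)
  · rw [← h, invert_apply]
    exact hp (-m) (by simpa using hm.le)

lemma toLaurent_mem_supportedIn (f : R[X]) : toLaurent f ∈ supportedIn (Set.Ici 0) := by
  intro m hm
  rw [coeff_toLaurent, Finsupp.mapDomain_of_notMem_range]
  rintro ⟨n, rfl⟩
  exact hm (Int.natCast_nonneg n)

lemma toLaurent_trunc_of_mem_supportedIn (hp : p ∈ supportedIn (Set.Ici 0)) :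
    toLaurent (trunc p) = p := by
  ext m
  rcases lt_or_ge m 0 with hm | hm
  · rw [toLaurent_mem_supportedIn _ m (not_le.mpr hm), hp m (not_le.mpr hm)]
  · lift m to ℕ using hm
    rw [coeff_toLaurent, show (m : ℤ) = Nat.castEmbedding m from rfl,
      Finsupp.mapDomain_apply Nat.castEmbedding.injective]
    rfl

end LaurentPolynomial

open LaurentPolynomial Polynomial in
lemma isVPol_iff_mem_supportedIn (p : ℤ[T;T⁻¹]) :
    IsVPol p ↔ p ∈ supportedIn (Set.Ioi 0) := by
  constructor
  · rintro ⟨q, rfl⟩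
    rw [← T_mul]
    exact T_mul_mem_supportedIn (by intro m hm; simp at *; omega) (toLaurent_mem_supportedIn q)
  · intro hp
    have hp' : T (-1) * p ∈ supportedIn (Set.Ici 0) :=
      T_mul_mem_supportedIn (by intro m hm; simp at *; omega) hp
    refine ⟨trunc (T (-1) * p), ?_⟩
    rw [toLaurent_trunc_of_mem_supportedIn hp', T_mul, mul_T_assoc]
    simp

namespace CoxeterSystem

variable (cs : CoxeterSystem M W)

lemma exists_eq_simple_mul_of_ne_one {x : W} (hx : x ≠ 1) :
    ∃ i y, x = cs.simple i * y ∧ cs.length (cs.simple i * y) = cs.length y + 1 := by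
  obtain ⟨i, hi⟩ := cs.exists_leftDescent_of_ne_one hx
  rw [cs.isLeftDescent_iff] at hi
  exact ⟨i, cs.simple i * x, by rw [cs.simple_mul_simple_cancel_left],
    by rw [cs.simple_mul_simple_cancel_left, hi]⟩

end CoxeterSystem

namespace HeckeAlg

open LaurentPolynomial

variable {cs : CoxeterSystem M W} {A : Type*} [Ring A] [Algebra ℤ[T;T⁻¹] A]
  (ha : HeckeAlg cs A)

lemma H_eq_smul (x : W) : ha.H x = (T (cs.length x : ℤ) : ℤ[T;T⁻¹]) • ha.Tb x :=
  (Algebra.smul_def _ _).symm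

noncomputable def Hb : Module.Basis W ℤ[T;T⁻¹] A :=
  ha.Tb.unitsSMul fun x => (isUnit_T (cs.length x : ℤ)).unit

@[simp] lemma Hb_apply (x : W) : ha.Hb x = ha.H x := by
  rw [Hb, Module.Basis.unitsSMul_apply, H_eq_smul, Units.smul_def, IsUnit.unit_spec]

lemma repr_H (x : W) : ha.Hb.repr (ha.H x) = Finsupp.single x 1 := by
  rw [← ha.Hb_apply, ha.Hb.repr_self]

lemma sum_repr_smul_H (a : A) : ((ha.Hb.repr a).sum fun z p => p • ha.H z) = a := by
  conv_rhs => rw [← ha.Hb.linearCombination_repr a]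
  rw [Finsupp.linearCombination_apply]
  simp only [Hb_apply]

lemma repr_sum_smul_H (f : W →₀ ℤ[T;T⁻¹]) :
    ha.Hb.repr (f.sum fun z p => p • ha.H z) = f := by
  simp only [← Hb_apply, ← Finsupp.linearCombination_apply, Module.Basis.repr_linearCombination]

lemma H_one : ha.H 1 = 1 := by
  rw [H_eq_smul, cs.length_one, Nat.cast_zero, T_zero, one_smul, ha.Tb_one]

lemma H_mul {x y : W} (h : cs.length (x * y) = cs.length x + cs.length y) :
    ha.H x * ha.H y = ha.H (x * y) := by
  rw [H_eq_smul, H_eq_smul, H_eq_smul, smul_mul_smul_comm, ← T_add, ha.Tb_mul x y h, h]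
  push_cast
  rfl

lemma H_simple_mul_self (i : B) :
    ha.H (cs.simple i) * ha.H (cs.simple i) =
      1 + (T (-1) - T 1 : ℤ[T;T⁻¹]) • ha.H (cs.simple i) := by
  have hq := ha.Tb_quadratic i
  rw [Algebra.algebraMap_eq_smul_one, mul_sub, add_mul, add_mul, one_mul, one_mul,
    mul_smul_comm, mul_one, sub_eq_zero] at hq
  rw [H_eq_smul, cs.length_simple, smul_mul_smul_comm, ← T_add,
    eq_sub_of_add_eq hq]
  simp only [smul_sub, smul_add, smul_smul, sub_mul, ← T_add, sub_smul]
  norm_num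
  abel

lemma H_simple_mul_of_length_lt {i : B} {z : W} (h : cs.length z < cs.length (cs.simple i * z)) :
    ha.H (cs.simple i) * ha.H z = ha.H (cs.simple i * z) := by
  refine ha.H_mul ?_
  rw [cs.length_simple]
  rcases cs.length_simple_mul z i with h' | h' <;> omega

lemma Cs_mul_H_of_length_lt {i : B} {z : W} (h : cs.length z < cs.length (cs.simple i * z)) :
    ha.Cs i * ha.H z = ha.H (cs.simple i * z) + (T 1 : ℤ[T;T⁻¹]) • ha.H z := by
  rw [Cs, add_mul, ha.H_simple_mul_of_length_lt h, ← Algebra.smul_def]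

lemma Cs_mul_H_of_lt_length {i : B} {z : W} (h : cs.length (cs.simple i * z) < cs.length z) :
    ha.Cs i * ha.H z = ha.H (cs.simple i * z) + (T (-1) : ℤ[T;T⁻¹]) • ha.H z := by
  have hz : ha.H (cs.simple i) * ha.H (cs.simple i * z) = ha.H z := by
    conv_rhs => rw [← cs.simple_mul_simple_cancel_left i (w := z)]
    exact ha.H_simple_mul_of_length_lt (by rwa [cs.simple_mul_simple_cancel_left])
  rw [Cs, add_mul, ← hz, ← mul_assoc, H_simple_mul_self, add_mul, one_mul, smul_mul_assoc, hz,
    ← Algebra.smul_def, add_assoc, ← add_smul, sub_add_cancel]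

variable {ha}

namespace Bar

variable (bar : ha.Bar)

lemma map_algebraMap (p : ℤ[T;T⁻¹]) :
    bar.d (algebraMap ℤ[T;T⁻¹] A p) = algebraMap ℤ[T;T⁻¹] A (invert p) := by
  induction p using LaurentPolynomial.induction_on' with
  | add p q hp hq => simp only [map_add, hp, hq]
  | C_mul_T n a =>
    rw [eq_intCast (C : ℤ →+* ℤ[T;T⁻¹]) a]
    simp only [map_mul, map_intCast, invert_T, bar.d_scalar]

lemma map_smul (p : ℤ[T;T⁻¹]) (a : A) : bar.d (p • a) = invert p • bar.d a := by
  rw [Algebra.smul_def, map_mul, map_algebraMap, Algebra.smul_def]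

lemma map_H_simple (i : B) :
    bar.d (ha.H (cs.simple i)) = ha.H (cs.simple i) + (T 1 - T (-1) : ℤ[T;T⁻¹]) • 1 := by
  have hinv :
      ha.H (cs.simple i) * (ha.H (cs.simple i) + (T 1 - T (-1) : ℤ[T;T⁻¹]) • 1) = 1 := by
    rw [mul_add, H_simple_mul_self, mul_smul_comm, mul_one, add_assoc, ← add_smul,
      sub_add_sub_cancel', sub_self, zero_smul, add_zero]
  have h := bar.d_H_mul (cs.simple i)
  rw [cs.inv_simple] at h
  exact left_inv_eq_right_inv h hinv

lemma map_Cs (i : B) : bar.d (ha.Cs i) = ha.Cs i := by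
  rw [Cs, map_add, map_H_simple, bar.d_scalar, Algebra.algebraMap_eq_smul_one,
    Algebra.algebraMap_eq_smul_one, add_assoc, ← add_smul, sub_add_cancel]

end Bar

variable (ha)

def supportedBelow (n : ℕ) : Submodule ℤ[T;T⁻¹] A where
  carrier := {a | ∀ y, n ≤ cs.length y → ha.Hb.repr a y = 0}
  zero_mem' _ _ := by simp
  add_mem' ha hb y hy := by simp [ha y hy, hb y hy]
  smul_mem' _ _ ha y hy := by simp [ha y hy]

def coeffsIn (S : AddSubgroup ℤ[T;T⁻¹]) : AddSubgroup A where
  carrier := {a | ∀ y, ha.Hb.repr a y ∈ S}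
  zero_mem' _ := by simp [S.zero_mem]
  add_mem' ha hb y := by simpa using S.add_mem (ha y) (hb y)
  neg_mem' ha y := by simpa using S.neg_mem (ha y)

variable {ha}

lemma supportedBelow_mono {m n : ℕ} (h : m ≤ n) : ha.supportedBelow m ≤ ha.supportedBelow n :=
  fun _ ha y hy => ha y (h.trans hy)

lemma H_mem_supportedBelow {y : W} {n : ℕ} (h : cs.length y < n) :
    ha.H y ∈ ha.supportedBelow n := by
  intro z hz
  rw [repr_H, Finsupp.single_apply, if_neg]
  rintro rfl
  omega

lemma smul_H_mem_coeffsIn {S : AddSubgroup ℤ[T;T⁻¹]} {p : ℤ[T;T⁻¹]} (hp : p ∈ S)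
    (y : W) :
    p • ha.H y ∈ ha.coeffsIn S := by
  intro z
  rw [map_smul, repr_H, Finsupp.smul_single_one, Finsupp.single_apply]
  split_ifs
  exacts [hp, S.zero_mem]

lemma C_smul_mem_coeffsIn {S : AddSubgroup ℤ[T;T⁻¹]} {a : A} (h : a ∈ ha.coeffsIn S)
    (k : ℤ) :
    C k • a ∈ ha.coeffsIn S := by
  intro z
  rw [map_smul, Finsupp.smul_apply, smul_eq_mul, ← smul_eq_C_mul]
  exact S.zsmul_mem (h z) k

lemma Cs_mul_H (i : B) (w : W) :
    ha.Cs i * ha.H w = ha.H (cs.simple i * w) +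
      (if cs.IsLeftDescent w i then T (-1) else T 1 : ℤ[T;T⁻¹]) • ha.H w := by
  rcases (cs.length_simple_mul_ne w i).lt_or_gt with h | h
  · rw [ha.Cs_mul_H_of_lt_length h, if_pos (show cs.IsLeftDescent w i from h)]
  · rw [ha.Cs_mul_H_of_length_lt h, if_neg (show ¬cs.IsLeftDescent w i from h.not_gt)]

lemma repr_Cs_mul (i : B) (a : A) (z : W) :
    ha.Hb.repr (ha.Cs i * a) z = ha.Hb.repr a (cs.simple i * z) +
      (if cs.IsLeftDescent z i then T (-1) else T 1) * ha.Hb.repr a z := by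
  have key : Finsupp.lapply z ∘ₗ ha.Hb.repr.toLinearMap ∘ₗ
        LinearMap.mulLeft ℤ[T;T⁻¹] (ha.Cs i) =
      Finsupp.lapply (cs.simple i * z) ∘ₗ ha.Hb.repr.toLinearMap +
        (if cs.IsLeftDescent z i then T (-1) else T 1 : ℤ[T;T⁻¹]) •
          (Finsupp.lapply z ∘ₗ ha.Hb.repr.toLinearMap) := by
    refine ha.Hb.ext fun w => ?_
    simp only [LinearMap.comp_apply, LinearMap.add_apply, LinearMap.smul_apply,
      LinearMap.mulLeft_apply, Hb_apply, Cs_mul_H, map_add, map_smul, repr_H, LinearEquiv.coe_coe,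
      Finsupp.lapply_apply, Finsupp.single_apply]
    have hsw : cs.simple i * w = z ↔ w = cs.simple i * z := by
      rw [← eq_inv_mul_iff_mul_eq, cs.inv_simple]
    rcases eq_or_ne w z with rfl | hwz
    · rw [if_congr hsw rfl rfl]
    · rw [if_congr hsw rfl rfl, if_neg hwz, smul_zero, smul_zero]
  exact LinearMap.congr_fun key a

lemma Cs_mul_mem_supportedBelow (i : B) {a : A} {n : ℕ} (h : a ∈ ha.supportedBelow n) :
    ha.Cs i * a ∈ ha.supportedBelow (n + 1) := by
  intro z hz
  rw [repr_Cs_mul, h z (by omega), mul_zero, add_zero]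
  exact h _ (by rcases cs.length_simple_mul z i with h' | h' <;> omega)

lemma Cs_mul_mem_coeffsIn (i : B) {a : A} (h : a ∈ ha.coeffsIn (supportedIn (Set.Ioi 0))) :
    ha.Cs i * a ∈ ha.coeffsIn (supportedIn (Set.Ici 0)) := by
  intro z
  rw [repr_Cs_mul]
  refine add_mem (supportedIn_mono Set.Ioi_subset_Ici_self (h _)) ?_
  split_ifs
  all_goals exact T_mul_mem_supportedIn (fun m hm => by simp at hm ⊢; omega) (h z)

namespace Bar

variable (bar : ha.Bar)

lemma map_H_sub_H_mem_supportedBelow (x : W) :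
    bar.d (ha.H x) - ha.H x ∈ ha.supportedBelow (cs.length x) := by
  induction hn : cs.length x generalizing x with
  | zero =>
    rw [cs.length_eq_zero_iff] at hn
    rw [hn, ha.H_one, map_one, sub_self]
    exact zero_mem _
  | succ n ih =>
    obtain ⟨i, y, rfl, hy⟩ :=
      cs.exists_eq_simple_mul_of_ne_one (x := x) (by rintro rfl; simp at hn)
    have hHx : ha.H (cs.simple i * y) = ha.Cs i * ha.H y - (T 1 : ℤ[T;T⁻¹]) • ha.H y := by
      rw [ha.Cs_mul_H_of_length_lt (by omega), add_sub_cancel_right]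
    have hw := ih y (by omega)
    set w := bar.d (ha.H y) - ha.H y
    have key : bar.d (ha.H (cs.simple i * y)) - ha.H (cs.simple i * y) =
        ha.Cs i * w - (T (-1) : ℤ[T;T⁻¹]) • w +
          (T 1 - T (-1) : ℤ[T;T⁻¹]) • ha.H y := by
      rw [hHx, map_sub, map_mul, map_smul, map_Cs, invert_T, show bar.d (ha.H y) = ha.H y + w by
        simp [w]]
      simp only [mul_add, smul_add, sub_smul]
      abel
    rw [key]
    refine add_mem (sub_mem (Cs_mul_mem_supportedBelow i hw) ?_) ?_
    · exact supportedBelow_mono (by omega) (Submodule.smul_mem _ _ hw)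
    · exact Submodule.smul_mem _ _ (H_mem_supportedBelow (by omega))

lemma repr_map_of_forall_length_le {a : A} {y : W}
    (hy : ∀ z, ha.Hb.repr a z ≠ 0 → cs.length z ≤ cs.length y) :
    ha.Hb.repr (bar.d a) y = invert (ha.Hb.repr a y) := by
  have hH (z : W) (hz : cs.length z ≤ cs.length y) :
      ha.Hb.repr (bar.d (ha.H z)) y = Finsupp.single z 1 y := by
    rw [← ha.repr_H z, ← sub_eq_zero, ← Finsupp.sub_apply, ← map_sub]
    exact map_H_sub_H_mem_supportedBelow bar z y hz
  conv_lhs => rw [← ha.sum_repr_smul_H a]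
  rw [map_finsuppSum, map_finsuppSum, Finsupp.sum_apply, Finsupp.sum, Finset.sum_eq_single y]
  · rw [map_smul, _root_.map_smul, Finsupp.smul_apply, hH y le_rfl, Finsupp.single_eq_same,
      smul_eq_mul, mul_one]
  · intro z hz hzy
    rw [map_smul, _root_.map_smul, Finsupp.smul_apply, hH z (hy z (Finsupp.mem_support_iff.mp hz)),
      Finsupp.single_eq_of_ne hzy.symm, smul_zero]
  · intro hy
    rw [Finsupp.notMem_support_iff.mp hy, zero_smul, map_zero, map_zero, Finsupp.zero_apply]

lemma eq_zero_of_map_eq_self {a : A} (hd : bar.d a = a)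
    (h : a ∈ ha.coeffsIn (supportedIn (Set.Ioi 0))) : a = 0 := by
  by_contra hne
  obtain ⟨y, hy, hmax⟩ := (ha.Hb.repr a).support.exists_max_image cs.length
    (Finsupp.support_nonempty_iff.mpr (by simpa using hne))
  have := repr_map_of_forall_length_le bar fun z hz => hmax z (Finsupp.mem_support_iff.mpr hz)
  rw [hd] at this
  exact Finsupp.mem_support_iff.mp hy (eq_zero_of_invert_eq_self (h y) this.symm)

end Bar

variable (bar : ha.Bar)

-- For `S = supportedIn (Set.Ioi 0)` this is the Kazhdan–Lusztig condition strengthened by the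
-- support bound on which the induction over `ℓ(x)` runs.
structure IsSelfDualTriangular (S : AddSubgroup ℤ[T;T⁻¹]) (x : W) (c : A) : Prop where
  map_eq_self : bar.d c = c
  sub_H_mem_supportedBelow : c - ha.H x ∈ ha.supportedBelow (cs.length x)
  sub_H_mem_coeffsIn : c - ha.H x ∈ ha.coeffsIn S

variable {bar}

lemma isSelfDualTriangular_one (S : AddSubgroup ℤ[T;T⁻¹]) :
    IsSelfDualTriangular bar S 1 1 where
  map_eq_self := map_one _
  sub_H_mem_supportedBelow := by rw [ha.H_one, sub_self]; exact zero_mem _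
  sub_H_mem_coeffsIn := by rw [ha.H_one, sub_self]; exact zero_mem _

lemma IsSelfDualTriangular.Cs_mul {i : B} {y : W} {c : A}
    (hc : IsSelfDualTriangular bar (supportedIn (Set.Ioi 0)) y c)
    (hy : cs.length (cs.simple i * y) = cs.length y + 1) :
    IsSelfDualTriangular bar (supportedIn (Set.Ici 0)) (cs.simple i * y) (ha.Cs i * c) := by
  have key : ha.Cs i * c - ha.H (cs.simple i * y) =
      (T 1 : ℤ[T;T⁻¹]) • ha.H y + ha.Cs i * (c - ha.H y) := by
    rw [mul_sub, ha.Cs_mul_H_of_length_lt (by omega)]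
    abel
  refine ⟨by rw [map_mul, bar.map_Cs, hc.map_eq_self], ?_, ?_⟩
  · rw [key, hy]
    exact add_mem (Submodule.smul_mem _ _ (H_mem_supportedBelow (by omega)))
      (Cs_mul_mem_supportedBelow i hc.sub_H_mem_supportedBelow)
  · rw [key]
    exact add_mem (smul_H_mem_coeffsIn (T_mem_supportedIn (by simp)) y)
      (Cs_mul_mem_coeffsIn i hc.sub_H_mem_coeffsIn)

lemma IsSelfDualTriangular.exists_Ioi_of_Ici {x : W} {a : A}
    (hTri : IsSelfDualTriangular bar (supportedIn (Set.Ici 0)) x a)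
    (hlower : ∀ z, cs.length z < cs.length x →
      ∃ c, IsSelfDualTriangular bar (supportedIn (Set.Ioi 0)) z c) :
    ∃ c, IsSelfDualTriangular bar (supportedIn (Set.Ioi 0)) x c := by
  choose! g hg using hlower
  set b := a - ha.H x
  have hsupp (z : W) (hz : ha.Hb.repr b z ≠ 0) : cs.length z < cs.length x :=
    not_le.mp fun h => hz (hTri.sub_H_mem_supportedBelow z h)
  set c := a - (ha.Hb.repr b).sum fun z p => C (p.coeff 0) • g z
  have key : c - ha.H x = (ha.Hb.repr b).sum fun z p =>
      (p - C (p.coeff 0)) • ha.H z - C (p.coeff 0) • (g z - ha.H z) := by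
    have hc : c - ha.H x = b - (ha.Hb.repr b).sum fun z p => C (p.coeff 0) • g z := by
      simp only [c, b]
      abel
    rw [hc]
    nth_rewrite 1 [← ha.sum_repr_smul_H b]
    rw [← Finsupp.sum_sub]
    refine Finsupp.sum_congr fun z _ => ?_
    rw [sub_smul, smul_sub]
    abel
  refine ⟨c, ⟨?_, ?_, ?_⟩⟩
  · rw [map_sub, map_finsuppSum, hTri.map_eq_self]
    congr 1
    refine Finsupp.sum_congr fun z hz => ?_
    rw [bar.map_smul, invert_C, (hg z (hsupp z (Finsupp.mem_support_iff.mp hz))).map_eq_self]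
  · rw [key]
    refine Submodule.finsuppSum_mem _ _ _ _ fun z hz => sub_mem ?_ ?_
    · exact Submodule.smul_mem _ _ (H_mem_supportedBelow (hsupp z hz))
    · exact Submodule.smul_mem _ _
        (supportedBelow_mono (hsupp z hz).le (hg z (hsupp z hz)).sub_H_mem_supportedBelow)
  · rw [key]
    refine AddSubmonoidClass.finsuppSum_mem _ _ _ fun z hz => sub_mem ?_ ?_
    · exact smul_H_mem_coeffsIn (sub_C_coeff_zero_mem_supportedIn (hTri.sub_H_mem_coeffsIn z)) z
    · exact C_smul_mem_coeffsIn (hg z (hsupp z hz)).sub_H_mem_coeffsIn _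

lemma isKL_iff {x : W} {c : A} :
    ha.IsKL bar x c ↔ bar.d c = c ∧ c - ha.H x ∈ ha.coeffsIn (supportedIn (Set.Ioi 0)) := by
  refine and_congr_right fun _ => ⟨?_, fun h => ?_⟩
  · rintro ⟨f, hf, rfl⟩ y
    rw [add_sub_cancel_left, repr_sum_smul_H]
    exact (isVPol_iff_mem_supportedIn _).mp (hf y)
  · refine ⟨ha.Hb.repr (c - ha.H x), fun y => (isVPol_iff_mem_supportedIn _).mpr (h y), ?_⟩
    rw [ha.sum_repr_smul_H, add_sub_cancel]

variable (bar)

lemma exists_isSelfDualTriangular (x : W) :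
    ∃ c, IsSelfDualTriangular bar (supportedIn (Set.Ioi 0)) x c := by
  induction hn : cs.length x using Nat.strong_induction_on generalizing x with
  | _ n ih =>
  obtain rfl | hx := eq_or_ne x 1
  · exact ⟨1, isSelfDualTriangular_one _⟩
  obtain ⟨i, y, rfl, hy⟩ := cs.exists_eq_simple_mul_of_ne_one hx
  obtain ⟨c, hc⟩ := ih (cs.length y) (by omega) y rfl
  exact (hc.Cs_mul hy).exists_Ioi_of_Ici fun z hz => ih _ (by omega) z rfl

end HeckeAlg


/-- Kazhdan–Lusztig: for each `x` there is a unique self-dual element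
`C_x ∈ H_x + ∑_y v ℤ[v] H_y`. -/
theorem stmt6 {B W : Type*} [Group W] {M : CoxeterMatrix B} (cs : CoxeterSystem M W)
    (A : Type*) [Ring A] [Algebra (LaurentPolynomial ℤ) A] (ha : HeckeAlg cs A)
    (bar : ha.Bar) (x : W) :
    ∃! c : A, ha.IsKL bar x c := by
  obtain ⟨c, hc⟩ := exists_isSelfDualTriangular bar x
  refine ⟨c, isKL_iff.mpr ⟨hc.map_eq_self, hc.sub_H_mem_coeffsIn⟩, fun c' hc' => ?_⟩
  obtain ⟨hd', hc'⟩ := isKL_iff.mp hc'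
  refine sub_eq_zero.mp (bar.eq_zero_of_map_eq_self ?_ ?_)
  · rw [map_sub, hd', hc.map_eq_self]
  · simpa using sub_mem hc' hc.sub_H_mem_coeffsIn
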